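/- For the over-relaxed ADMM updates with relaxation parameter α, namely z⁺ = argmin_z (g(z) + (ρ/2)‖z - u - (α p⁺ + (1-α) z)‖²) where g is the indicator of the per-link zero-sum subspace and u is constant on each link, the updates simplify to z⁺_l = α(p⁺_l - p̄⁺_l·𝟙) + (1-α)·z_l and u⁺_l = u_l + α·p̄⁺_l·𝟙, provided z_l lies in the zero-sum subspace. -/

import Mathlib

/-! Since `u` is uniform and `z` has zero sum, `v = u + α p⁺ + (1-α) z` differs from
`w = α(p⁺ - p̄⁺𝟙) + (1-α) z` by a constant vector, which is orthogonal to the zero-sum subspace,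
while `w` lies in it. By Pythagoras `‖ζ - v‖² = ‖ζ - w‖² + ‖v - w‖²` on that subspace, so `w` is
its unique minimizer, and the dual update is the constant `v - w = u + α p̄⁺𝟙`. -/

open Finset

variable {ι : Type*} [Fintype ι]

theorem sum_sq_sub_add_const {ζ w : ι → ℝ} (h : ∑ i, ζ i = ∑ i, w i) (c : ℝ) :
    ∑ i, (ζ i - (w i + c)) ^ 2 = ∑ i, (ζ i - w i) ^ 2 + Fintype.card ι * c ^ 2 := by
  have hsq : ∀ i, (ζ i - (w i + c)) ^ 2 = (ζ i - w i) ^ 2 - 2 * c * (ζ i - w i) + c ^ 2 :=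
    fun i => by ring
  simp only [hsq, sum_add_distrib, sum_sub_distrib, ← mul_sum, h, sub_self, mul_zero, sub_zero,
    sum_const, card_univ, nsmul_eq_mul]

theorem eq_of_forall_sum_sq_sub_add_const_le {z w : ι → ℝ} (c : ℝ) (hz : ∑ i, z i = ∑ i, w i)
    (hmin : ∀ ζ : ι → ℝ, ∑ i, ζ i = ∑ i, w i →
      ∑ i, (z i - (w i + c)) ^ 2 ≤ ∑ i, (ζ i - (w i + c)) ^ 2) :
    z = w := by
  have hle := hmin w rfl
  rw [sum_sq_sub_add_const hz, sum_sq_sub_add_const rfl] at hle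
  have hzero : ∑ i, (z i - w i) ^ 2 = 0 :=
    le_antisymm (by simpa using hle) (sum_nonneg fun i _ => sq_nonneg _)
  funext i
  have := (sum_eq_zero_iff_of_nonneg fun j _ => sq_nonneg (z j - w j)).mp hzero i (mem_univ i)
  exact sub_eq_zero.mp (pow_eq_zero_iff two_ne_zero |>.mp this)

theorem sum_sub_mean_eq_zero [Nonempty ι] (p : ι → ℝ) :
    ∑ i, (p i - (∑ j, p j) / Fintype.card ι) = 0 := by
  rw [sum_sub_distrib, sum_const, card_univ, nsmul_eq_mul,
    mul_div_cancel₀ _ (Nat.cast_ne_zero.mpr Fintype.card_ne_zero), sub_self]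

/-- Over-relaxed PMP updates on one link with `k` terminals: if the scaled
price is uniform, `u = ū·𝟙`, and `z` lies in the zero-sum subspace, then any
minimizer `z⁺` of `(ρ/2)‖ζ - u - (α p⁺ + (1-α) z)‖²` over `{ζ : 𝟙ᵀζ = 0}`
equals `α(p⁺ - p̄⁺·𝟙) + (1-α)·z`, and the dual update
`u⁺ = u + (α p⁺ + (1-α) z) - z⁺` equals `u + α·p̄⁺·𝟙`. -/
theorem overrelaxed_pmp_updates (ρ α : ℝ) (hρ : 0 < ρ) (k : ℕ) (hk : 0 < k)
    (ubar : ℝ) (pplus z : Fin k → ℝ) (hz : ∑ i, z i = 0) :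
    let u : Fin k → ℝ := fun _ => ubar
    let pbar : ℝ := (∑ i, pplus i) / k
    let v : Fin k → ℝ := fun i => u i + (α * pplus i + (1 - α) * z i)
    ∀ zplus : Fin k → ℝ,
      ((∑ i, zplus i = 0) ∧ ∀ ζ : Fin k → ℝ, (∑ i, ζ i) = 0 →
        ρ / 2 * ∑ i, (zplus i - v i) ^ 2 ≤ ρ / 2 * ∑ i, (ζ i - v i) ^ 2) →
      (zplus = fun i => α * (pplus i - pbar) + (1 - α) * z i) ∧
      ((fun i => u i + (α * pplus i + (1 - α) * z i) - zplus i) =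
        fun i => u i + α * pbar) := by
  intro u pbar v zplus ⟨hsum, hmin⟩
  have : NeZero k := ⟨hk.ne'⟩
  set w : Fin k → ℝ := fun i => α * (pplus i - pbar) + (1 - α) * z i
  have hw : ∑ i, w i = 0 := by
    have hmean : ∑ i, (pplus i - pbar) = 0 := by simpa using sum_sub_mean_eq_zero pplus
    simp only [w, sum_add_distrib, ← mul_sum, hmean, hz, mul_zero, add_zero]
  have hv : ∀ i, v i = w i + (ubar + α * pbar) := fun i => by
    simp only [v, w, u]
    ring
  simp only [hv] at hmin
  have hzw : zplus = w :=
    eq_of_forall_sum_sq_sub_add_const_le (ubar + α * pbar) (hsum.trans hw.symm) fun ζ hζ =>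
      le_of_mul_le_mul_left (hmin ζ (hζ.trans hw)) (half_pos hρ)
  refine ⟨hzw, funext fun i => ?_⟩
  simp only [hzw, w, u]
  ring
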